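/- Let p ∈ (1, ∞) and let f : T → ℝ be harmonic on T. Then sup_{k ∈ ℤ} Σ_{x : ℓ(x)=k} |f(x)|^p m_ν(x) < ∞ (i.e. f ∈ H^p) if and only if there exists g ∈ L^p(∂T, ν) such that f = 𝒫g, i.e. f(x) = (1/m_ν(x)) ∫_{∂T_x} g dν for all x ∈ T. -/

import Mathlib

/-!
If `f = 𝒫 g` with `g ∈ Lᵖ`, Hölder's inequality on a sector gives
`|𝒫 g x|ᵖ m_ν(x) ≤ ∫_{∂T_x} |g|ᵖ dν`; the sectors of one level partition `∂T`, so summing over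
a level bounds the `Hᵖ` norm by `‖g‖ₚ`.

Conversely, fix a vertex `c`. On the sector `∂T_c` the functions `ω ↦ f (ω (ℓ c - n))` form a
martingale for the σ-algebras generated by `ω (ℓ c - n)`: harmonicity of `f` is exactly the
martingale property. The `Hᵖ` bound makes this martingale bounded in `Lᵖ`, so it converges a.e.
to a boundary function `g`, which lies in `Lᵖ` by Fatou's lemma. Since `p > 1` the martingale is
uniformly integrable, hence `∫_{∂T_c} g dν = f c · m_ν(c)`, i.e. `f = 𝒫 g`. The tree is countable
(it is connected and locally finite), which makes the evaluations `ω ↦ ω k` measurable and lets the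
sectorwise statements be glued together.
-/

open MeasureTheory
open scoped ENNReal NNReal

/-- The punctured boundary `∂T` of the tree: maps `ω : ℤ → T` with `lev (ω j) = j`
and `par (ω j) = ω (j+1)`. -/
def PBoundary {T : Type*} (par : T → T) (lev : T → ℤ) : Type _ :=
  {ω : ℤ → T // (∀ j : ℤ, lev (ω j) = j) ∧ ∀ j : ℤ, par (ω j) = ω (j + 1)}

/-- The boundary sector `∂T_x`. -/
def sector {T : Type*} (par : T → T) (lev : T → ℤ) (x : T) : Set (PBoundary par lev) :=
  {ω : PBoundary par lev | ω.1 (lev x) = x}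

/-- The σ-algebra on `∂T` generated by the sectors. -/
instance {T : Type*} (par : T → T) (lev : T → ℤ) : MeasurableSpace (PBoundary par lev) :=
  MeasurableSpace.generateFrom (Set.range (sector par lev))

/-- The flow measure `m_ν x = ν (∂T_x)` (as a real number). -/
noncomputable def mnu {T : Type*} (par : T → T) (lev : T → ℤ)
    (ν : Measure (PBoundary par lev)) (x : T) : ℝ :=
  (ν (sector par lev x)).toReal

/-- The Poisson integral operator `𝒫 g (x) = m_ν(x)⁻¹ ∫_{∂T_x} g dν`. -/
noncomputable def poisson {T : Type*} (par : T → T) (lev : T → ℤ)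
    (ν : Measure (PBoundary par lev)) (g : PBoundary par lev → ℝ) (x : T) : ℝ :=
  (mnu par lev ν x)⁻¹ * ∫ ω in sector par lev x, g ω ∂ν

/-- A function on `T` is harmonic if `Δf(x) = f(x) - Σ_{y ∈ s(x)} f(y) m_ν(y)/m_ν(x) = 0`
for every vertex `x`. -/
def Harmonic {T : Type*} (par : T → T) (lev : T → ℤ)
    (ν : Measure (PBoundary par lev)) (f : T → ℝ) : Prop :=
  ∀ x : T, f x = ∑ᶠ y ∈ {y : T | par y = x}, f y * (mnu par lev ν y / mnu par lev ν x)

open Filter Topology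

namespace MeasureTheory

section LpBounds

variable {α E : Type*} [MeasurableSpace α] {μ : Measure α} [NormedAddCommGroup E] {p : ℝ}

theorem memLp_ofReal_iff_lintegral_rpow_lt_top (hp : 0 < p) {f : α → E}
    (hf : AEStronglyMeasurable f μ) :
    MemLp f (ENNReal.ofReal p) μ ↔ ∫⁻ x, ‖f x‖ₑ ^ p ∂μ < ∞ := by
  rw [MemLp, and_iff_right hf,
    eLpNorm_lt_top_iff_lintegral_rpow_enorm_lt_top (by simpa using hp) ENNReal.ofReal_ne_top,
    ENNReal.toReal_ofReal hp.le]

theorem eLpNorm_one_le_lintegral_rpow_mul (hp : 1 ≤ p) {f : α → E}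
    (hf : AEStronglyMeasurable f μ) :
    eLpNorm f 1 μ ≤ (∫⁻ x, ‖f x‖ₑ ^ p ∂μ) ^ (1 / p) * μ Set.univ ^ (1 - 1 / p) := by
  have h := eLpNorm'_le_eLpNorm'_mul_rpow_measure_univ one_pos hp hf
  rw [eLpNorm', eLpNorm'] at h
  simpa [eLpNorm_one_eq_lintegral_enorm] using h

theorem rpow_sub_one_mul_eLpNorm_one_indicator_le (hp : 1 ≤ p) (f : α → E) (C : ℝ≥0) :
    (C : ℝ≥0∞) ^ (p - 1) * eLpNorm ({x | C ≤ ‖f x‖₊}.indicator f) 1 μ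
      ≤ ∫⁻ x, ‖f x‖ₑ ^ p ∂μ := by
  rw [eLpNorm_one_eq_lintegral_enorm]
  refine (lintegral_const_mul_le _ _).trans (lintegral_mono fun x => ?_)
  by_cases hx : C ≤ ‖f x‖₊
  · have hCx : (C : ℝ≥0∞) ≤ ‖f x‖ₑ := by rwa [enorm_eq_nnnorm, ENNReal.coe_le_coe]
    rw [Set.indicator_of_mem (show x ∈ {x | C ≤ ‖f x‖₊} from hx)]
    calc (C : ℝ≥0∞) ^ (p - 1) * ‖f x‖ₑ ≤ ‖f x‖ₑ ^ (p - 1) * ‖f x‖ₑ ^ (1 : ℝ) := by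
          rw [ENNReal.rpow_one]; gcongr
      _ = ‖f x‖ₑ ^ p := by
          rw [← ENNReal.rpow_add_of_nonneg _ _ (by linarith) zero_le_one, sub_add_cancel]
  · rw [Set.indicator_of_notMem (show x ∉ {x | C ≤ ‖f x‖₊} from hx)]
    simp

theorem unifIntegrable_one_of_lintegral_rpow_le {ι : Type*} (hp : 1 < p) {f : ι → α → E}
    (hf : ∀ i, AEStronglyMeasurable (f i) μ) {M : ℝ≥0∞} (hM : M ≠ ∞)
    (hbdd : ∀ i, ∫⁻ x, ‖f i x‖ₑ ^ p ∂μ ≤ M) : UnifIntegrable f 1 μ := by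
  refine unifIntegrable_of le_rfl ENNReal.one_ne_top hf fun ε hε => ?_
  have hpow : Tendsto (fun C : ℝ≥0 => (C : ℝ≥0∞) ^ (p - 1)) atTop (𝓝 ∞) := by
    simpa [ENNReal.coe_rpow_of_nonneg _ (by linarith : 0 ≤ p - 1)] using
      ENNReal.tendsto_coe_nhds_top.2 (NNReal.tendsto_rpow_atTop (by linarith : 0 < p - 1))
  have hlim : Tendsto (fun C : ℝ≥0 => M * ((C : ℝ≥0∞) ^ (p - 1))⁻¹) atTop (𝓝 0) := by
    simpa using ENNReal.Tendsto.const_mul (tendsto_inv_iff.2 hpow) (Or.inr hM)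
  obtain ⟨C, hCε, hC1⟩ :=
    ((tendsto_order.1 hlim).2 _ (ENNReal.ofReal_pos.2 hε)).and (eventually_ge_atTop 1) |>.exists
  refine ⟨C, fun i => le_trans ?_ hCε.le⟩
  have hC0 : (C : ℝ≥0∞) ^ (p - 1) ≠ 0 :=
    (ENNReal.rpow_pos (by simpa using zero_lt_one.trans_le hC1) ENNReal.coe_ne_top).ne'
  have hCtop : (C : ℝ≥0∞) ^ (p - 1) ≠ ∞ :=
    ENNReal.rpow_ne_top_of_nonneg (by linarith) ENNReal.coe_ne_top
  rw [← div_eq_mul_inv, ENNReal.le_div_iff_mul_le (Or.inl hC0) (Or.inl hCtop), mul_comm]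
  exact (rpow_sub_one_mul_eLpNorm_one_indicator_le hp.le _ C).trans (hbdd i)

end LpBounds

section Martingale

variable {Ω E : Type*} {m0 : MeasurableSpace Ω} {μ : Measure Ω} [IsFiniteMeasure μ]
  {ℱ : Filtration ℕ m0} {p : ℝ} {M : ℝ≥0∞}

theorem Submartingale.exists_ae_tendsto_of_lintegral_rpow_le {X : ℕ → Ω → ℝ}
    (hX : Submartingale X ℱ μ) (hp : 1 ≤ p) (hM : M ≠ ∞)
    (hbdd : ∀ n, ∫⁻ ω, ‖X n ω‖ₑ ^ p ∂μ ≤ M) :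
    ∀ᵐ ω ∂μ, ∃ c, Tendsto (fun n => X n ω) atTop (𝓝 c) := by
  have hR : M ^ (1 / p) * μ Set.univ ^ (1 - 1 / p) ≠ ∞ :=
    ENNReal.mul_ne_top (ENNReal.rpow_ne_top_of_nonneg (by positivity) hM)
      (ENNReal.rpow_ne_top_of_nonneg (sub_nonneg.2 (div_le_one_of_le₀ hp (by linarith)))
        (measure_ne_top μ _))
  refine hX.exists_ae_tendsto_of_bdd (R := (M ^ (1 / p) * μ Set.univ ^ (1 - 1 / p)).toNNReal)
    fun n => ?_
  rw [ENNReal.coe_toNNReal hR]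
  refine (eLpNorm_one_le_lintegral_rpow_mul hp
    ((hX.stronglyMeasurable n).mono (ℱ.le n)).aestronglyMeasurable).trans ?_
  gcongr
  exact hbdd n

theorem Martingale.integral_eq_of_tendsto_ae [NormedAddCommGroup E] [NormedSpace ℝ E]
    [CompleteSpace E] {X : ℕ → Ω → E} (hX : Martingale X ℱ μ) (hp : 1 < p) (hM : M ≠ ∞)
    (hbdd : ∀ n, ∫⁻ ω, ‖X n ω‖ₑ ^ p ∂μ ≤ M) {g : Ω → E} (hg : Integrable g μ)
    (hlim : ∀ᵐ ω ∂μ, Tendsto (fun n => X n ω) atTop (𝓝 (g ω))) :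
    ∫ ω, g ω ∂μ = ∫ ω, X 0 ω ∂μ := by
  have hmeas n : AEStronglyMeasurable (X n) μ :=
    ((hX.stronglyMeasurable n).mono (ℱ.le n)).aestronglyMeasurable
  have hL1 := tendsto_Lp_finite_of_tendsto_ae le_rfl ENNReal.one_ne_top hmeas
    (memLp_one_iff_integrable.2 hg) (unifIntegrable_one_of_lintegral_rpow_le hp hmeas hM hbdd)
    hlim
  refine tendsto_nhds_unique (tendsto_integral_of_L1 g hg.aestronglyMeasurable
    (Eventually.of_forall hX.integrable) (by simpa [eLpNorm_one_eq_lintegral_enorm] using hL1))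
    (tendsto_const_nhds.congr fun n => ?_)
  simpa using hX.setIntegral_eq n.zero_le MeasurableSet.univ

end Martingale

end MeasureTheory

theorem tendsto_comp_sub_natCast_atTop_iff {α : Type*} {a : ℤ → α} {l : Filter α} (k : ℤ) :
    Tendsto (fun n : ℕ => a (k - n)) atTop l ↔ Tendsto a atBot l := by
  have hneg : (fun j : ℤ => k - j) = Neg.neg ∘ fun j => j - k := funext fun j => by simp
  have hmap : map (fun n : ℕ => k - n) atTop = atBot := by
    change map ((fun j : ℤ => k - j) ∘ Nat.cast) atTop = atBot
    rw [← map_map, Nat.map_cast_int_atTop, hneg, ← map_map, map_sub_atTop_eq, map_neg_atTop]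
  rw [← hmap, tendsto_map'_iff]
  rfl

theorem ofReal_abs_rpow {r p : ℝ} (hp : 0 ≤ p) : ENNReal.ofReal (|r| ^ p) = ‖r‖ₑ ^ p := by
  rw [← ENNReal.ofReal_rpow_of_nonneg (abs_nonneg r) hp, Real.enorm_eq_ofReal_abs]

section Tree

variable {T : Type*} {par : T → T} {lev : T → ℤ}

theorem PBoundary.iterate_par_apply (ω : PBoundary par lev) (j : ℤ) :
    ∀ n : ℕ, par^[n] (ω.1 j) = ω.1 (j + n)
  | 0 => by simp
  | n + 1 => by
    rw [Function.iterate_succ_apply', ω.iterate_par_apply j n, ω.2.2]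
    push_cast
    ring_nf

theorem mem_sector_iff {ω : PBoundary par lev} {x : T} :
    ω ∈ sector par lev x ↔ ω.1 (lev x) = x :=
  Iff.rfl

theorem PBoundary.mem_sector_apply (ω : PBoundary par lev) (k : ℤ) :
    ω ∈ sector par lev (ω.1 k) := by
  rw [mem_sector_iff, ω.2.1 k]

theorem measurableSet_sector (x : T) : MeasurableSet (sector par lev x) :=
  MeasurableSpace.measurableSet_generateFrom ⟨x, rfl⟩

theorem disjoint_sector {x y : T} (hxy : lev x = lev y) (hne : x ≠ y) :
    Disjoint (sector par lev x) (sector par lev y) :=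
  Set.disjoint_left.2 fun _ hx hy => hne (hx.symm.trans (hxy ▸ hy))

theorem lev_iterate (hlev : ∀ x, lev (par x) = lev x + 1) (x : T) :
    ∀ n : ℕ, lev (par^[n] x) = lev x + n
  | 0 => by simp
  | n + 1 => by
    rw [Function.iterate_succ_apply', hlev, lev_iterate hlev x n]
    push_cast
    ring

variable (par) in
def descendants (n : ℕ) (x : T) : Set T := {y | par^[n] y = x}

theorem finite_descendants (hfin : ∀ x, {y | par y = x}.Finite) :
    ∀ (n : ℕ) (x : T), (descendants par n x).Finite
  | 0, x => by simp [descendants]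
  | n + 1, x => by
    have h : descendants par (n + 1) x = ⋃ z ∈ {z | par z = x}, descendants par n z := by
      ext y
      simp [descendants, Function.iterate_succ_apply']
    rw [h]
    exact (hfin x).biUnion fun z _ => finite_descendants hfin n z

theorem lev_of_mem_descendants (hlev : ∀ x, lev (par x) = lev x + 1) {n : ℕ} {x y : T}
    (hy : y ∈ descendants par n x) : lev y = lev x - n := by
  have h := lev_iterate hlev y n
  rw [hy] at h
  omega

theorem PBoundary.apply_sub_mem_descendants {ω : PBoundary par lev} {x : T}
    (hω : ω ∈ sector par lev x) (n : ℕ) : ω.1 (lev x - n) ∈ descendants par n x := by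
  rw [descendants, Set.mem_ofPred_eq, ω.iterate_par_apply, sub_add_cancel]
  exact hω

theorem sector_subset_of_mem_descendants (hlev : ∀ x, lev (par x) = lev x + 1) {n : ℕ}
    {x y : T} (hy : y ∈ descendants par n x) : sector par lev y ⊆ sector par lev x := by
  intro ω hω
  have hlev_xy : lev x = lev y + n := by
    have := lev_of_mem_descendants hlev hy
    omega
  rw [mem_sector_iff, hlev_xy, ← ω.iterate_par_apply, mem_sector_iff.1 hω, hy]

theorem sector_eq_biUnion_descendants (hlev : ∀ x, lev (par x) = lev x + 1) (x : T)
    (n : ℕ) : sector par lev x = ⋃ y ∈ descendants par n x, sector par lev y :=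
  subset_antisymm
    (fun ω hω => Set.mem_biUnion (ω.apply_sub_mem_descendants hω n)
      (ω.mem_sector_apply (lev x - n)))
    (Set.iUnion₂_subset fun _ hy => sector_subset_of_mem_descendants hlev hy)

theorem countable_of_finite_children (hfin : ∀ x, {y | par y = x}.Finite)
    (hconn : ∀ x y : T, ∃ n m : ℕ, par^[n] x = par^[m] y) : Countable T := by
  rcases isEmpty_or_nonempty T with hT | ⟨⟨x₀⟩⟩
  · infer_instance
  refine Set.countable_univ_iff.1 <| (Set.countable_iUnion fun m => Set.countable_iUnion
    fun n => (finite_descendants hfin n (par^[m] x₀)).countable).mono fun y _ => ?_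
  obtain ⟨n, m, h⟩ := hconn y x₀
  exact Set.mem_iUnion₂.2 ⟨m, n, h⟩

variable {ν : Measure (PBoundary par lev)}

theorem mnu_ne_zero {x : T} (h₀ : ν (sector par lev x) ≠ 0) (h : ν (sector par lev x) ≠ ∞) :
    mnu par lev ν x ≠ 0 :=
  ENNReal.toReal_ne_zero.2 ⟨h₀, h⟩

theorem setLIntegral_sector_comp_apply (φ : T → ℝ≥0∞) (x : T) :
    ∫⁻ ω in sector par lev x, φ (ω.1 (lev x)) ∂ν = φ x * ν (sector par lev x) := by
  rw [setLIntegral_congr_fun (measurableSet_sector x) fun ω hω => by rw [mem_sector_iff.1 hω],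
    setLIntegral_const]

theorem setIntegral_sector_comp_apply (φ : T → ℝ) (x : T) :
    ∫ ω in sector par lev x, φ (ω.1 (lev x)) ∂ν = φ x * mnu par lev ν x := by
  rw [setIntegral_congr_fun (measurableSet_sector x) fun ω hω => by rw [mem_sector_iff.1 hω],
    setIntegral_const, smul_eq_mul, mul_comm]
  rfl

theorem setIntegral_sector_eq_sum (hlev : ∀ x, lev (par x) = lev x + 1)
    (hfin : ∀ x, {y | par y = x}.Finite) {φ : PBoundary par lev → ℝ} {x : T}
    (hφ : IntegrableOn φ (sector par lev x) ν) (n : ℕ) :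
    ∫ ω in sector par lev x, φ ω ∂ν
      = ∑ y ∈ (finite_descendants hfin n x).toFinset, ∫ ω in sector par lev y, φ ω ∂ν := by
  have hset : sector par lev x
      = ⋃ y ∈ (finite_descendants hfin n x).toFinset, sector par lev y := by
    simpa using sector_eq_biUnion_descendants hlev x n
  rw [hset]
  refine integral_biUnion_finset _ (fun y _ => measurableSet_sector y) (fun y hy z hz hyz => ?_)
    fun y hy => hφ.mono_set ?_
  · simp only [Set.Finite.coe_toFinset] at hy hz
    exact disjoint_sector
      (by rw [lev_of_mem_descendants hlev hy, lev_of_mem_descendants hlev hz]) hyz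
  · exact sector_subset_of_mem_descendants hlev ((Set.Finite.mem_toFinset _).1 hy)

theorem setIntegral_sector_indicator_preimage_apply (x : T) (A : Set T)
    (g : PBoundary par lev → ℝ) :
    ∫ ω in sector par lev x, ((fun ω : PBoundary par lev => ω.1 (lev x)) ⁻¹' A).indicator g ω ∂ν
      = A.indicator (fun _ => ∫ ω in sector par lev x, g ω ∂ν) x := by
  have hmem : ∀ ω ∈ sector par lev x,
      ω ∈ (fun ω : PBoundary par lev => ω.1 (lev x)) ⁻¹' A ↔ x ∈ A :=
    fun ω hω => by rw [Set.mem_preimage, mem_sector_iff.1 hω]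
  by_cases hxA : x ∈ A
  · rw [Set.indicator_of_mem hxA]
    exact setIntegral_congr_fun (measurableSet_sector x)
      fun ω hω => Set.indicator_of_mem ((hmem ω hω).2 hxA) g
  · rw [Set.indicator_of_notMem hxA]
    exact setIntegral_eq_zero_of_forall_eq_zero
      fun ω hω => Set.indicator_of_notMem (mt (hmem ω hω).1 hxA) g

theorem Harmonic.mul_mnu_eq_sum {f : T → ℝ} (hf : Harmonic par lev ν f)
    (hfin : ∀ x, {y | par y = x}.Finite) {x : T} (hx : mnu par lev ν x ≠ 0) :
    f x * mnu par lev ν x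
      = ∑ y ∈ (finite_descendants hfin 1 x).toFinset, f y * mnu par lev ν y := by
  rw [hf x, show {y | par y = x} = descendants par 1 x from rfl,
    finsum_mem_eq_finite_toFinset_sum _ (finite_descendants hfin 1 x), Finset.sum_mul]
  refine Finset.sum_congr rfl fun y _ => ?_
  field_simp

theorem enorm_poisson_rpow_mul_le {x : T} (hν₀ : ν (sector par lev x) ≠ 0)
    (hν_top : ν (sector par lev x) ≠ ∞) {p : ℝ} (hp : 1 ≤ p) {g : PBoundary par lev → ℝ}
    (hg : AEStronglyMeasurable g ν) :
    ‖poisson par lev ν g x‖ₑ ^ p * ν (sector par lev x)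
      ≤ ∫⁻ ω in sector par lev x, ‖g ω‖ₑ ^ p ∂ν := by
  set V := ν (sector par lev x)
  set J := ∫⁻ ω in sector par lev x, ‖g ω‖ₑ ^ p ∂ν
  have hp0 : 0 < p := by linarith
  have hI : ‖∫ ω in sector par lev x, g ω ∂ν‖ₑ ≤ J ^ (1 / p) * V ^ (1 - 1 / p) := by
    refine (enorm_integral_le_lintegral_enorm _).trans ?_
    simpa [eLpNorm_one_eq_lintegral_enorm, V] using
      eLpNorm_one_le_lintegral_rpow_mul hp hg.restrict
  have hP : ‖poisson par lev ν g x‖ₑ = V⁻¹ * ‖∫ ω in sector par lev x, g ω ∂ν‖ₑ := by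
    rw [poisson, enorm_mul, mnu, Real.enorm_eq_ofReal (inv_nonneg.2 ENNReal.toReal_nonneg),
      ENNReal.ofReal_inv_of_pos (ENNReal.toReal_pos hν₀ hν_top), ENNReal.ofReal_toReal hν_top]
  have hsplit : V ^ p = V ^ (p - 1) * V := by
    have h := ENNReal.rpow_add (p - 1) 1 hν₀ hν_top
    rwa [sub_add_cancel, ENNReal.rpow_one] at h
  have hVp : V ^ p ≠ 0 := (ENNReal.rpow_pos (pos_iff_ne_zero.2 hν₀) hν_top).ne'
  have hVp' : V ^ p ≠ ∞ := ENNReal.rpow_ne_top_of_nonneg hp0.le hν_top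
  calc ‖poisson par lev ν g x‖ₑ ^ p * V
      ≤ (V⁻¹ * (J ^ (1 / p) * V ^ (1 - 1 / p))) ^ p * V := by rw [hP]; gcongr
    _ = J * ((V ^ p)⁻¹ * V ^ p) := by
      rw [ENNReal.mul_rpow_of_nonneg _ _ hp0.le, ENNReal.mul_rpow_of_nonneg _ _ hp0.le,
        ← ENNReal.rpow_mul, ← ENNReal.rpow_mul, ENNReal.inv_rpow, one_div_mul_cancel hp0.ne',
        ENNReal.rpow_one, sub_mul, one_mul, one_div_mul_cancel hp0.ne', hsplit]
      ring
    _ = J := by rw [ENNReal.inv_mul_cancel hVp hVp', mul_one]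

section Countable

variable [Countable T]

theorem measurableSet_preimage_apply (k : ℤ) (A : Set T) :
    MeasurableSet ((fun ω : PBoundary par lev => ω.1 k) ⁻¹' A) := by
  have h : (fun ω : PBoundary par lev => ω.1 k) ⁻¹' A
      = ⋃ x ∈ A ∩ {x | lev x = k}, sector par lev x := by
    ext ω
    simp only [Set.mem_preimage, Set.mem_iUnion₂]
    constructor
    · intro hω
      exact ⟨ω.1 k, ⟨hω, ω.2.1 k⟩, ω.mem_sector_apply k⟩
    · rintro ⟨x, ⟨hxA, hxk⟩, hω⟩
      rwa [← hxk, mem_sector_iff.1 hω]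
  rw [h]
  exact MeasurableSet.biUnion (Set.to_countable _) fun x _ => measurableSet_sector x

theorem measurable_comp_apply {β : Type*} [MeasurableSpace β] (φ : T → β) (k : ℤ) :
    Measurable fun ω : PBoundary par lev => φ (ω.1 k) :=
  fun s _ => measurableSet_preimage_apply (par := par) k (φ ⁻¹' s)

theorem lintegral_eq_tsum_sector (k : ℤ) (h : PBoundary par lev → ℝ≥0∞) :
    ∫⁻ ω, h ω ∂ν = ∑' x : {x : T // lev x = k}, ∫⁻ ω in sector par lev x.1, h ω ∂ν := by
  have hcover : ⋃ x : {x : T // lev x = k}, sector par lev x.1 = Set.univ :=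
    Set.iUnion_eq_univ_iff.2 fun ω => ⟨⟨ω.1 k, ω.2.1 k⟩, ω.mem_sector_apply k⟩
  rw [← setLIntegral_univ, ← hcover]
  exact lintegral_iUnion (fun x => measurableSet_sector x.1)
    (fun (x y : {x : T // lev x = k}) hxy =>
      disjoint_sector (x.2.trans y.2.symm) (Subtype.coe_injective.ne hxy)) h

theorem lintegral_comp_apply_eq_tsum (k : ℤ) (φ : T → ℝ≥0∞) :
    ∫⁻ ω, φ (ω.1 k) ∂ν = ∑' x : {x : T // lev x = k}, φ x * ν (sector par lev x) := by
  rw [lintegral_eq_tsum_sector k]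
  refine tsum_congr fun ⟨x, hx⟩ => ?_
  subst hx
  exact setLIntegral_sector_comp_apply φ x

theorem tsum_ofReal_abs_rpow_mul_eq_lintegral {p : ℝ} (hp : 0 ≤ p) (φ : T → ℝ) (k : ℤ) :
    ∑' x : {x : T // lev x = k}, ENNReal.ofReal (|φ x.1| ^ p) * ν (sector par lev x.1)
      = ∫⁻ ω, ‖φ (ω.1 k)‖ₑ ^ p ∂ν := by
  simp_rw [lintegral_comp_apply_eq_tsum k (fun t => ‖φ t‖ₑ ^ p), ofReal_abs_rpow hp]

theorem lintegral_enorm_poisson_comp_apply_rpow_le (hν₀ : ∀ x, ν (sector par lev x) ≠ 0)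
    (hν_top : ∀ x, ν (sector par lev x) ≠ ∞) {p : ℝ} (hp : 1 ≤ p) {g : PBoundary par lev → ℝ}
    (hg : AEStronglyMeasurable g ν) (k : ℤ) :
    ∫⁻ ω, ‖poisson par lev ν g (ω.1 k)‖ₑ ^ p ∂ν ≤ ∫⁻ ω, ‖g ω‖ₑ ^ p ∂ν := by
  rw [lintegral_comp_apply_eq_tsum k (fun t => ‖poisson par lev ν g t‖ₑ ^ p),
    lintegral_eq_tsum_sector k]
  exact ENNReal.tsum_le_tsum fun x => enorm_poisson_rpow_mul_le (hν₀ x) (hν_top x) hp hg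

theorem integrableOn_sector_comp_apply_sub (hfin : ∀ x, {y | par y = x}.Finite) {x : T}
    (hν_top : ν (sector par lev x) ≠ ∞) (φ : T → ℝ) (n : ℕ) :
    IntegrableOn (fun ω => φ (ω.1 (lev x - n))) (sector par lev x) ν := by
  have := isFiniteMeasure_restrict.2 hν_top
  refine Integrable.of_bound (measurable_comp_apply φ _).aestronglyMeasurable
    (∑ y ∈ (finite_descendants hfin n x).toFinset, ‖φ y‖) ?_
  filter_upwards [ae_restrict_mem (measurableSet_sector x)] with ω hω
  exact Finset.single_le_sum (f := fun y => ‖φ y‖) (fun _ _ => norm_nonneg _)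
    ((Set.Finite.mem_toFinset _).2 (ω.apply_sub_mem_descendants hω n))

theorem Harmonic.setIntegral_sector_comp_apply_sub_one {f : T → ℝ} (hf : Harmonic par lev ν f)
    (hlev : ∀ x, lev (par x) = lev x + 1) (hfin : ∀ x, {y | par y = x}.Finite)
    (hν₀ : ∀ x, ν (sector par lev x) ≠ 0) (hν_top : ∀ x, ν (sector par lev x) ≠ ∞) (x : T) :
    ∫ ω in sector par lev x, f (ω.1 (lev x - 1)) ∂ν = f x * mnu par lev ν x := by
  have hsum := setIntegral_sector_eq_sum hlev hfin
    (integrableOn_sector_comp_apply_sub hfin (hν_top x) f 1) 1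
  rw [Nat.cast_one] at hsum
  rw [hsum, hf.mul_mnu_eq_sum hfin (mnu_ne_zero (hν₀ x) (hν_top x))]
  refine Finset.sum_congr rfl fun y hy => ?_
  have hly := lev_of_mem_descendants hlev ((Set.Finite.mem_toFinset _).1 hy)
  rw [Nat.cast_one] at hly
  rw [← hly, setIntegral_sector_comp_apply]

variable (par lev) in
def levelFiltration (k : ℤ) :
    Filtration ℕ (inferInstance : MeasurableSpace (PBoundary par lev)) where
  seq n := MeasurableSpace.comap (fun ω => ω.1 (k - n)) ⊤
  mono' n m hnm := by
    obtain ⟨d, rfl⟩ := Nat.exists_eq_add_of_le hnm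
    have h : (fun ω : PBoundary par lev => ω.1 (k - n))
        = par^[d] ∘ fun ω => ω.1 (k - ↑(n + d)) := by
      ext ω
      rw [Function.comp_apply, ω.iterate_par_apply]
      push_cast
      ring_nf
    beta_reduce
    rw [h, ← MeasurableSpace.comap_comp]
    exact MeasurableSpace.comap_mono le_top
  le' n := MeasurableSpace.comap_le_iff_le_map.2 fun A _ => measurableSet_preimage_apply _ A

theorem Harmonic.martingale {f : T → ℝ} (hf : Harmonic par lev ν f)
    (hlev : ∀ x, lev (par x) = lev x + 1) (hfin : ∀ x, {y | par y = x}.Finite)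
    (hν₀ : ∀ x, ν (sector par lev x) ≠ 0) (hν_top : ∀ x, ν (sector par lev x) ≠ ∞) (c : T) :
    Martingale (fun n ω => f (ω.1 (lev c - n))) (levelFiltration par lev (lev c))
      (ν.restrict (sector par lev c)) := by
  have := isFiniteMeasure_restrict.2 (hν_top c)
  have hint n := integrableOn_sector_comp_apply_sub hfin (hν_top c) f n
  refine martingale_of_setIntegral_eq_succ
    (fun n => (measurable_from_top.comp (comap_measurable _)).stronglyMeasurable) hint
    fun n s hs => ?_
  obtain ⟨A, -, rfl⟩ := hs
  have hA := measurableSet_preimage_apply (par := par) (lev := lev) (lev c - n) A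
  rw [← integral_indicator hA, ← integral_indicator hA,
    setIntegral_sector_eq_sum hlev hfin ((hint n).indicator hA) n,
    setIntegral_sector_eq_sum hlev hfin ((hint (n + 1)).indicator hA) n]
  refine Finset.sum_congr rfl fun y hy => ?_
  have hly := lev_of_mem_descendants hlev ((Set.Finite.mem_toFinset _).1 hy)
  have hly' : lev c - ↑(n + 1) = lev y - 1 := by push_cast; omega
  simp only [← hly, hly']
  rw [setIntegral_sector_indicator_preimage_apply, setIntegral_sector_indicator_preimage_apply,
    setIntegral_sector_comp_apply, hf.setIntegral_sector_comp_apply_sub_one hlev hfin hν₀ hν_top]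

/-- `limUnder` takes an arbitrary value where the limit does not exist; by
`Harmonic.ae_tendsto_boundaryLimit` this happens only on a null set. -/
noncomputable def boundaryLimit (f : T → ℝ) (ω : PBoundary par lev) : ℝ :=
  limUnder atBot fun j => f (ω.1 j)

theorem Harmonic.ae_tendsto_boundaryLimit {f : T → ℝ} (hf : Harmonic par lev ν f)
    (hlev : ∀ x, lev (par x) = lev x + 1) (hfin : ∀ x, {y | par y = x}.Finite)
    (hν₀ : ∀ x, ν (sector par lev x) ≠ 0) (hν_top : ∀ x, ν (sector par lev x) ≠ ∞) {p : ℝ}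
    (hp : 1 ≤ p) {M : ℝ≥0∞} (hM : M ≠ ∞) (hbdd : ∀ k, ∫⁻ ω, ‖f (ω.1 k)‖ₑ ^ p ∂ν ≤ M) :
    ∀ᵐ ω ∂ν, Tendsto (fun j => f (ω.1 j)) atBot (𝓝 (boundaryLimit f ω)) := by
  have hcover : ⋃ c : T, sector par lev c = Set.univ :=
    Set.iUnion_eq_univ_iff.2 fun ω => ⟨ω.1 0, ω.mem_sector_apply 0⟩
  rw [← Measure.restrict_univ (μ := ν), ← hcover, ae_restrict_iUnion_iff]
  intro c
  have := isFiniteMeasure_restrict.2 (hν_top c)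
  filter_upwards [(hf.martingale hlev hfin hν₀ hν_top c).submartingale
    |>.exists_ae_tendsto_of_lintegral_rpow_le hp hM
      fun n => (setLIntegral_le_lintegral _ _).trans (hbdd _)] with ω ⟨L, hL⟩
  exact tendsto_nhds_limUnder ⟨L, (tendsto_comp_sub_natCast_atTop_iff _).1 hL⟩

theorem memLp_of_tendsto_comp_apply_atBot {f : T → ℝ} {p : ℝ} (hp : 0 < p) {M : ℝ≥0∞} (hM : M ≠ ∞)
    (hbdd : ∀ k, ∫⁻ ω, ‖f (ω.1 k)‖ₑ ^ p ∂ν ≤ M) {g : PBoundary par lev → ℝ}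
    (hlim : ∀ᵐ ω ∂ν, Tendsto (fun j => f (ω.1 j)) atBot (𝓝 (g ω))) :
    MemLp g (ENNReal.ofReal p) ν := by
  have hmeas : AEStronglyMeasurable g ν := aestronglyMeasurable_of_tendsto_ae atBot
    (fun k => (measurable_comp_apply f k).aestronglyMeasurable) hlim
  have hfatou : ∫⁻ ω, ‖g ω‖ₑ ^ p ∂ν ≤ M :=
    calc ∫⁻ ω, ‖g ω‖ₑ ^ p ∂ν = ∫⁻ ω, liminf (fun k => ‖f (ω.1 k)‖ₑ ^ p) atBot ∂ν :=
          lintegral_congr_ae <| hlim.mono fun ω hω =>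
            ((ENNReal.continuous_rpow_const.tendsto _).comp
              ((continuous_enorm.tendsto _).comp hω)).liminf_eq.symm
      _ ≤ liminf (fun k => ∫⁻ ω, ‖f (ω.1 k)‖ₑ ^ p ∂ν) atBot :=
          lintegral_liminf_le' fun k =>
            (measurable_comp_apply (fun t => ‖f t‖ₑ ^ p) k).aemeasurable
      _ ≤ M := liminf_le_of_frequently_le' (Frequently.of_forall hbdd)
  exact (memLp_ofReal_iff_lintegral_rpow_lt_top hp hmeas).2 (hfatou.trans_lt hM.lt_top)

theorem Harmonic.setIntegral_sector_eq_of_tendsto {f : T → ℝ} (hf : Harmonic par lev ν f)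
    (hlev : ∀ x, lev (par x) = lev x + 1) (hfin : ∀ x, {y | par y = x}.Finite)
    (hν₀ : ∀ x, ν (sector par lev x) ≠ 0) (hν_top : ∀ x, ν (sector par lev x) ≠ ∞) {p : ℝ}
    (hp : 1 < p) {M : ℝ≥0∞} (hM : M ≠ ∞) (hbdd : ∀ k, ∫⁻ ω, ‖f (ω.1 k)‖ₑ ^ p ∂ν ≤ M)
    {g : PBoundary par lev → ℝ} (hg : MemLp g (ENNReal.ofReal p) ν)
    (hlim : ∀ᵐ ω ∂ν, Tendsto (fun j => f (ω.1 j)) atBot (𝓝 (g ω))) (c : T) :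
    ∫ ω in sector par lev c, g ω ∂ν = f c * mnu par lev ν c := by
  have := isFiniteMeasure_restrict.2 (hν_top c)
  rw [(hf.martingale hlev hfin hν₀ hν_top c).integral_eq_of_tendsto_ae hp hM
    (fun n => (setLIntegral_le_lintegral _ _).trans (hbdd _))
    ((hg.restrict _).integrable (ENNReal.one_le_ofReal.2 hp.le))
    (ae_restrict_of_ae (hlim.mono fun ω hω => (tendsto_comp_sub_natCast_atTop_iff _).2 hω))]
  simpa using setIntegral_sector_comp_apply f c

end Countable

end Tree

theorem stmt6_general {T : Type*} (par : T → T) (lev : T → ℤ)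
    (hlev : ∀ x : T, lev (par x) = lev x + 1)
    (hfin : ∀ x : T, {y : T | par y = x}.Finite)
    (hconn : ∀ x y : T, ∃ n m : ℕ, par^[n] x = par^[m] y)
    (ν : Measure (PBoundary par lev))
    (hν : ∀ x : T, 0 < ν (sector par lev x) ∧ ν (sector par lev x) < ⊤)
    (p : ℝ) (hp : 1 < p)
    (f : T → ℝ) (hf : Harmonic par lev ν f) :
    (⨆ k : ℤ, ∑' x : {x : T // lev x = k},
        ENNReal.ofReal (|f x.1| ^ p) * ν (sector par lev x.1)) < ⊤
      ↔ ∃ g : PBoundary par lev → ℝ,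
          MemLp g (ENNReal.ofReal p) ν ∧ ∀ x : T, f x = poisson par lev ν g x := by
  have := countable_of_finite_children hfin hconn
  have hν₀ x : ν (sector par lev x) ≠ 0 := (hν x).1.ne'
  have hν_top x : ν (sector par lev x) ≠ ∞ := (hν x).2.ne
  simp_rw [tsum_ofReal_abs_rpow_mul_eq_lintegral (by linarith : 0 ≤ p) f]
  constructor
  · intro hM
    have hbdd k := le_iSup (fun k => ∫⁻ ω, ‖f (ω.1 k)‖ₑ ^ p ∂ν) k
    have hlim := hf.ae_tendsto_boundaryLimit hlev hfin hν₀ hν_top hp.le hM.ne hbdd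
    have hg := memLp_of_tendsto_comp_apply_atBot (by linarith) hM.ne hbdd hlim
    refine ⟨boundaryLimit f, hg, fun x => ?_⟩
    rw [poisson, hf.setIntegral_sector_eq_of_tendsto hlev hfin hν₀ hν_top hp hM.ne hbdd hg hlim x,
      mul_comm (f x), inv_mul_cancel_left₀ (mnu_ne_zero (hν₀ x) (hν_top x))]
  · rintro ⟨g, hg, hfg⟩
    obtain rfl : f = poisson par lev ν g := funext hfg
    calc ⨆ k, ∫⁻ ω, ‖poisson par lev ν g (ω.1 k)‖ₑ ^ p ∂ν ≤ ∫⁻ ω, ‖g ω‖ₑ ^ p ∂ν :=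
          iSup_le (lintegral_enorm_poisson_comp_apply_rpow_le hν₀ hν_top hp.le hg.1)
      _ < ∞ := (memLp_ofReal_iff_lintegral_rpow_lt_top (by linarith) hg.1).1 hg

/-- For `p ∈ (1,∞)`, a harmonic function `f` belongs to `H^p`
(i.e. `sup_k Σ_{ℓ(x)=k} |f(x)|^p m_ν(x) < ∞`) if and only if it is the Poisson
integral of some `g ∈ L^p(∂T, ν)`. -/
theorem stmt6 {T : Type*} [Nonempty T] (par : T → T) (lev : T → ℤ)
    (hlev : ∀ x : T, lev (par x) = lev x + 1)
    (hfin : ∀ x : T, {y : T | par y = x}.Finite)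
    (hsucc : ∀ x : T, ∃ y : T, par y = x)
    (hconn : ∀ x y : T, ∃ n m : ℕ, par^[n] x = par^[m] y)
    (ν : Measure (PBoundary par lev))
    (hν : ∀ x : T, 0 < ν (sector par lev x) ∧ ν (sector par lev x) < ⊤)
    (p : ℝ) (hp : 1 < p)
    (f : T → ℝ) (hf : Harmonic par lev ν f) :
    (⨆ k : ℤ, ∑' x : {x : T // lev x = k},
        ENNReal.ofReal (|f x.1| ^ p) * ν (sector par lev x.1)) < ⊤
      ↔ ∃ g : PBoundary par lev → ℝ,
          MemLp g (ENNReal.ofReal p) ν ∧ ∀ x : T, f x = poisson par lev ν g x :=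
  stmt6_general par lev hlev hfin hconn ν hν p hp f hf
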